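/- In Algorithm GDA, the sequence {f(x^k)} is convergent, and both series ∑ ⟨∇f(x^k), x^k − x^{k+1}⟩ and ∑ ‖x^{k+1} − x^k‖² are finite; in particular ‖x^{k+1} − x^k‖ → 0. -/

import Mathlib

open InnerProductSpace Filter

lemma proj_vi {E : Type*} [NormedAddCommGroup E] [InnerProductSpace ℝ E]
    {K : Set E} (hK : Convex ℝ K) {p v : E} (hv : v ∈ K)
    (hmin : ∀ z ∈ K, ‖v - p‖ ≤ ‖z - p‖) :
    ∀ w ∈ K, (inner ℝ (p - v) (w - v) : ℝ) ≤ 0 := by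
  haveI : Nonempty K := ⟨⟨v, hv⟩⟩
  apply (norm_eq_iInf_iff_real_inner_le_zero hK hv).mp
  refine le_antisymm (le_ciInf fun w => ?_) (ciInf_le (f := fun w : K => ‖p - (w : E)‖) ⟨0, fun _ ⟨_, h⟩ => h ▸ norm_nonneg _⟩ ⟨v, hv⟩)
  · rw [norm_sub_rev p v, norm_sub_rev p w.1]
    exact hmin w.1 w.2

lemma descent_lem {E : Type*} [NormedAddCommGroup E] [InnerProductSpace ℝ E]
    [CompleteSpace E]
    {f : E → ℝ} {f' : E → E} {a b : E} {L : ℝ}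
    (hseg : ∀ z ∈ segment ℝ a b, HasGradientAt f (f' z) z)
    (hlip : ∀ z ∈ segment ℝ a b, ‖f' z - f' a‖ ≤ L * ‖b - a‖) :
    f b ≤ f a + (inner ℝ (f' a) (b - a) : ℝ) + L * ‖b - a‖ ^ 2 := by
  set g : E → ℝ := fun z => f z - (inner ℝ (f' a) z : ℝ) with hg
  have hd : ∀ z ∈ segment ℝ a b,
      HasFDerivWithinAt g (toDual ℝ E (f' z - f' a)) (segment ℝ a b) z := by
    intro z hz
    have h1 : HasFDerivAt f (toDual ℝ E (f' z)) z := (hseg z hz).hasFDerivAt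
    have h2 : HasFDerivAt (fun w => (inner ℝ (f' a) w : ℝ)) (toDual ℝ E (f' a)) z := by
      exact (toDual ℝ E (f' a)).hasFDerivAt (x := z)
    have := (h1.sub h2).hasFDerivWithinAt (s := segment ℝ a b)
    rwa [← map_sub] at this
  have key := Convex.norm_image_sub_le_of_norm_hasFDerivWithin_le hd
      (fun z hz => by rw [LinearIsometryEquiv.norm_map]; exact hlip z hz)
      (convex_segment a b) (left_mem_segment ℝ a b) (right_mem_segment ℝ a b)
  have h3 : g b - g a ≤ (L * ‖b - a‖) * ‖b - a‖ := (le_abs_self _).trans key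
  have h4 : (inner ℝ (f' a) b : ℝ) - inner ℝ (f' a) a = inner ℝ (f' a) (b - a) := by
    rw [inner_sub_right]
  simp only [hg] at h3
  nlinarith [h3, h4]

theorem stmt_13 {m : ℕ} (C : Set (EuclideanSpace ℝ (Fin m))) (hC : C.Nonempty)
    (hCcl : IsClosed C) (hCconv : Convex ℝ C)
    (f : EuclideanSpace ℝ (Fin m) → ℝ)
    (f' : EuclideanSpace ℝ (Fin m) → EuclideanSpace ℝ (Fin m))
    (U : Set (EuclideanSpace ℝ (Fin m))) (hU : IsOpen U) (hCU : C ⊆ U)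
    (hf : ∀ x ∈ U, HasGradientAt f (f' x) x)
    (L : ℝ) (hL : 0 ≤ L)
    (hLip : ∀ x ∈ U, ∀ y ∈ U, ‖f' x - f' y‖ ≤ L * ‖x - y‖)
    (σ κ : ℝ) (hσ : σ ∈ Set.Ioo (0:ℝ) 1) (hκ : κ ∈ Set.Ioo (0:ℝ) 1)
    (x : ℕ → EuclideanSpace ℝ (Fin m)) (lam : ℕ → ℝ)
    (hx0 : x 0 ∈ C) (hlam0 : 0 < lam 0)
    (hproj : ∀ k, x (k + 1) ∈ C ∧ ∀ z ∈ C,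
      ‖x (k + 1) - (x k - lam k • f' (x k))‖ ≤ ‖z - (x k - lam k • f' (x k))‖)
    (hstep : ∀ k,
      (f (x (k + 1)) ≤ f (x k) - σ * (inner ℝ (f' (x k)) (x k - x (k + 1)) : ℝ) →
        lam (k + 1) = lam k) ∧
      (¬ f (x (k + 1)) ≤ f (x k) - σ * (inner ℝ (f' (x k)) (x k - x (k + 1)) : ℝ) →
        lam (k + 1) = κ * lam k))
    (hsol : ∃ xs ∈ C, ∀ z ∈ C, f xs ≤ f z) :
    (∃ c : ℝ, Filter.Tendsto (fun k => f (x k)) Filter.atTop (nhds c)) ∧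
    Summable (fun k => (inner ℝ (f' (x k)) (x k - x (k + 1)) : ℝ)) ∧
    Summable (fun k => ‖x (k + 1) - x k‖ ^ 2) ∧
    Filter.Tendsto (fun k => ‖x (k + 1) - x k‖) Filter.atTop (nhds 0) := by
  obtain ⟨hσ0, hσ1⟩ := hσ
  obtain ⟨hκ0, hκ1⟩ := hκ
  obtain ⟨xs, hxsC, hxsmin⟩ := hsol
  set s : ℕ → ℝ := fun k => (inner ℝ (f' (x k)) (x k - x (k + 1)) : ℝ) with hs_def
  have hxC : ∀ k, x k ∈ C := by
    intro k
    cases k with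
    | zero => exact hx0
    | succ n => exact (hproj n).1
  have hlam_pos : ∀ k, 0 < lam k := by
    intro k
    induction k with
    | zero => exact hlam0
    | succ n ih =>
      by_cases h : f (x (n + 1)) ≤ f (x n) - σ * s n
      · rw [(hstep n).1 h]; exact ih
      · rw [(hstep n).2 h]; positivity
  have hlam_succ : ∀ k, lam (k + 1) ≤ lam k := by
    intro k
    by_cases h : f (x (k + 1)) ≤ f (x k) - σ * s k
    · rw [(hstep k).1 h]
    · rw [(hstep k).2 h]; nlinarith [hlam_pos k]
  have hlam_anti : Antitone lam := antitone_nat_of_succ_le hlam_succ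
  have hkey : ∀ k, ‖x (k + 1) - x k‖ ^ 2 ≤ lam k * s k := by
    intro k
    have hvi := proj_vi hCconv (hproj k).1 (fun z hz => (hproj k).2 z hz) (x k) (hxC k)
    have hexp : (x k - lam k • f' (x k)) - x (k + 1)
        = (x k - x (k + 1)) - lam k • f' (x k) := by module
    rw [hexp, inner_sub_left, real_inner_smul_left, real_inner_self_eq_norm_sq] at hvi
    rw [norm_sub_rev]
    linarith
  have hs_nonneg : ∀ k, 0 ≤ s k := by
    intro k
    nlinarith [hkey k, hlam_pos k, sq_nonneg ‖x (k + 1) - x k‖]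
  have hdescent : ∀ k, f (x (k + 1)) ≤ f (x k) - s k + L * ‖x (k + 1) - x k‖ ^ 2 := by
    intro k
    have hsegC : segment ℝ (x k) (x (k + 1)) ⊆ C :=
      hCconv.segment_subset (hxC k) (hxC (k + 1))
    have h1 : ∀ z ∈ segment ℝ (x k) (x (k + 1)), HasGradientAt f (f' z) z :=
      fun z hz => hf z (hCU (hsegC hz))
    have h2 : ∀ z ∈ segment ℝ (x k) (x (k + 1)),
        ‖f' z - f' (x k)‖ ≤ L * ‖x (k + 1) - x k‖ := by
      intro z hz
      refine (hLip z (hCU (hsegC hz)) (x k) (hCU (hxC k))).trans ?_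
      have hle : ‖z - x k‖ ≤ ‖x (k + 1) - x k‖ := by
        obtain ⟨t, u, ht, hu, htu, rfl⟩ := hz
        have ht' : t = 1 - u := by linarith
        subst ht'
        have he : (1 - u) • x k + u • x (k + 1) - x k = u • (x (k + 1) - x k) := by module
        rw [he, norm_smul, Real.norm_eq_abs, abs_of_nonneg hu]
        nlinarith [norm_nonneg (x (k + 1) - x k)]
      exact mul_le_mul_of_nonneg_left hle hL
    have hdl := descent_lem h1 h2
    have hinner : (inner ℝ (f' (x k)) (x (k + 1) - x k) : ℝ) = - s k := by
      rw [hs_def]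
      simp only [← inner_neg_right]
      congr 1
      abel
    rw [hinner] at hdl
    linarith
  have hA : ∀ k, L * lam k ≤ 1 - σ → f (x (k + 1)) ≤ f (x k) - σ * s k := by
    intro k hk
    have h1 := hdescent k
    have h4 : L * ‖x (k + 1) - x k‖ ^ 2 ≤ L * (lam k * s k) :=
      mul_le_mul_of_nonneg_left (hkey k) hL
    have h5 : 0 ≤ (1 - σ - L * lam k) * s k :=
      mul_nonneg (by linarith) (hs_nonneg k)
    nlinarith
  have hB : ∀ k, L * lam k ≤ 1 - σ → ∀ j, k ≤ j →
      (f (x (j + 1)) ≤ f (x j) - σ * s j) ∧ L * lam j ≤ 1 - σ := by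
    intro k hk j hj
    induction j, hj using Nat.le_induction with
    | base => exact ⟨hA k hk, hk⟩
    | succ n hn ih =>
      have heq : lam (n + 1) = lam n := (hstep n).1 ih.1
      have h2 : L * lam (n + 1) ≤ 1 - σ := by rw [heq]; exact ih.2
      exact ⟨hA (n + 1) h2, h2⟩
  have hN : ∃ N, ∀ k, N ≤ k → f (x (k + 1)) ≤ f (x k) - σ * s k := by
    by_contra hcon
    push_neg at hcon
    have hsmall : ∀ n, ∃ k, lam k ≤ κ ^ n * lam 0 := by
      intro n
      induction n with
      | zero => exact ⟨0, by simp⟩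
      | succ n ih =>
        obtain ⟨k, hk⟩ := ih
        obtain ⟨j, hjk, hjfail⟩ := hcon k
        refine ⟨j + 1, ?_⟩
        have heq : lam (j + 1) = κ * lam j := (hstep j).2 (not_le.mpr hjfail)
        have hmono := hlam_anti hjk
        rw [heq, pow_succ]
        nlinarith
    have htend : Filter.Tendsto (fun n => L * (κ ^ n * lam 0)) atTop (nhds 0) := by
      have h0 : Filter.Tendsto (fun n : ℕ => κ ^ n) atTop (nhds 0) :=
        tendsto_pow_atTop_nhds_zero_of_lt_one (le_of_lt hκ0) hκ1
      simpa using ((h0.mul_const (lam 0)).const_mul L)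
    have hev : ∀ᶠ n in atTop, L * (κ ^ n * lam 0) < 1 - σ :=
      htend.eventually_lt_const (by linarith)
    obtain ⟨n, hn⟩ := hev.exists
    obtain ⟨k, hk⟩ := hsmall n
    have hLk : L * lam k ≤ 1 - σ := by
      have := mul_le_mul_of_nonneg_left hk hL
      linarith
    obtain ⟨j, hjk, hjfail⟩ := hcon k
    exact absurd ((hB k hLk j hjk).1) (not_le.mpr hjfail)
  obtain ⟨N, hdes⟩ := hN
  have hmono : ∀ j, N ≤ j → f (x (j + 1)) ≤ f (x j) := by
    intro j hj
    have h1 := hdes j hj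
    nlinarith [hs_nonneg j]
  have hlb : ∀ k, f xs ≤ f (x k) := fun k => hxsmin (x k) (hxC k)
  have hganti : Antitone fun i => f (x (N + i)) := by
    apply antitone_nat_of_succ_le
    intro i
    exact hmono (N + i) (Nat.le_add_right N i)
  have hgbdd : BddBelow (Set.range fun i => f (x (N + i))) := by
    refine ⟨f xs, ?_⟩
    rintro y ⟨i, rfl⟩
    exact hlb _
  have hgtend := tendsto_atTop_ciInf hganti hgbdd
  have hftend : Filter.Tendsto (fun k => f (x k)) Filter.atTop
      (nhds (⨅ i, f (x (N + i)))) := by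
    rw [← Filter.tendsto_add_atTop_iff_nat N]
    have : (fun k => f (x (k + N))) = fun i => f (x (N + i)) := by
      funext i; rw [Nat.add_comm]
    rw [this]
    exact hgtend
  have htel : ∀ M, σ * (∑ i ∈ Finset.range M, s (N + i)) ≤ f (x N) - f (x (N + M)) := by
    intro M
    induction M with
    | zero => simp
    | succ M ih =>
      rw [Finset.sum_range_succ, mul_add]
      have h1 := hdes (N + M) (Nat.le_add_right _ _)
      have h2 : N + (M + 1) = N + M + 1 := by ring
      rw [h2]
      linarith
  have hsum_tail : Summable fun i => s (N + i) := by
    apply summable_of_sum_range_le (c := (f (x N) - f xs) / σ) (fun i => hs_nonneg _)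
    intro M
    rw [le_div_iff₀ hσ0]
    have h1 := htel M
    have h2 := hlb (N + M)
    nlinarith
  have hsum_s : Summable s := by
    apply (summable_nat_add_iff N).mp
    have he : (fun n => s (n + N)) = fun i => s (N + i) := funext fun i => by rw [Nat.add_comm]
    rw [he]; exact hsum_tail
  have hsum_sq : Summable fun k => ‖x (k + 1) - x k‖ ^ 2 := by
    refine Summable.of_nonneg_of_le (fun k => sq_nonneg _) (fun k => ?_)
      (hsum_s.mul_left (lam 0))
    exact (hkey k).trans (mul_le_mul_of_nonneg_right (hlam_anti (Nat.zero_le k)) (hs_nonneg k))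
  have hnorm : Filter.Tendsto (fun k => ‖x (k + 1) - x k‖) Filter.atTop (nhds 0) := by
    have h0 := hsum_sq.tendsto_atTop_zero
    have h1 : Filter.Tendsto (fun k => Real.sqrt (‖x (k + 1) - x k‖ ^ 2)) Filter.atTop
        (nhds (Real.sqrt 0)) := (Real.continuous_sqrt.continuousAt).tendsto.comp h0
    simpa [Real.sqrt_sq (norm_nonneg _)] using h1
  exact ⟨⟨_, hftend⟩, hsum_s, hsum_sq, hnorm⟩
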